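/- arXiv:1508.03052 — 2 statements merged into one kernel-verified Lean document; each statement's English description precedes it below -/
import Mathlib

section
/- Let σ = 2d − 2 ≥ 8 be an even integer and let T = Cat(d₁, …, d_ℓ) be the caterpillar tree of length ℓ = σ − 1 with d_i = d − 1 for odd i and d_i = d for even i. Then there is no edge-coloring φ of T using colors from {1, …, σ}, in which every two distinct edges at distance at most two receive different colors, such that φ(E₁) = {1, …, d−1}, φ(E_ℓ) = {d, …, 2d−2}, φ(x₀x₁) = 1 and φ(x_ℓ x_{ℓ+1}) = d. In particular T is not σ-two-sided strong edge-pre-colorable, although σ(T) = σ. -/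
open SimpleGraph

/-- The degree of a vertex (cardinality of its neighbor set). -/
noncomputable def ndeg {V : Type*} (G : SimpleGraph V) (v : V) : ℕ :=
  (G.neighborSet v).ncard

/-- `σ(G)`: the maximum of `deg x + deg y - 1` over all edges `xy` of `G`. -/
noncomputable def sigmaG {V : Type*} (G : SimpleGraph V) : ℕ :=
  sSup {m | ∃ x y, G.Adj x y ∧ m = ndeg G x + ndeg G y - 1}

/-- The maximum degree `Δ(G)`. -/
noncomputable def maxDeg {V : Type*} (G : SimpleGraph V) : ℕ :=
  sSup (Set.range (ndeg G))

/-- Two edges are at distance at most two: they share an endpoint, or an endpoint of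
one is adjacent to an endpoint of the other. -/
def EdgesNear {V : Type*} (G : SimpleGraph V) (e f : Sym2 V) : Prop :=
  ∃ u v, u ∈ e ∧ v ∈ f ∧ (u = v ∨ G.Adj u v)

/-- A strong edge-coloring: every two distinct edges at distance at most two
receive different colors. -/
def IsStrongEdgeColoring {V α : Type*} (G : SimpleGraph V) (φ : Sym2 V → α) : Prop :=
  ∀ e ∈ G.edgeSet, ∀ f ∈ G.edgeSet, e ≠ f → EdgesNear G e f → φ e ≠ φ f

/-- The strong chromatic index `χ'ₛ(G)`: the least `k` such that `G` has a strong
edge-coloring with colors `0, …, k-1`. -/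
noncomputable def strongChromaticIndex {V : Type*} (G : SimpleGraph V) : ℕ :=
  sInf {k | ∃ φ : Sym2 V → ℕ, (∀ e ∈ G.edgeSet, φ e < k) ∧ IsStrongEdgeColoring G φ}

/-- The set of edges incident with a vertex `v`. -/
def Einc {V : Type*} (G : SimpleGraph V) (v : V) : Set (Sym2 V) :=
  {e ∈ G.edgeSet | v ∈ e}
/-- The vertex type of the caterpillar tree `Cat(d 1, …, d ℓ)`: the spine
`x_0, x_1, …, x_{ℓ+1}` (as `Fin (ℓ+2)`) together with `d (i+1) - 2` pendant leaves
attached to the spine vertex `x_{i+1}` for each `i : Fin ℓ`. -/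
abbrev CatV (ℓ : ℕ) (d : ℕ → ℕ) : Type :=
  Fin (ℓ + 2) ⊕ (Σ i : Fin ℓ, Fin (d (i.val + 1) - 2))

/-- Generating relation for the caterpillar: consecutive spine vertices are adjacent,
and each leaf in the `i`-th leaf group is adjacent to the spine vertex `x_{i+1}`. -/
def CatRel (ℓ : ℕ) (d : ℕ → ℕ) : CatV ℓ d → CatV ℓ d → Prop
  | Sum.inl i, Sum.inl j => (j : ℕ) = (i : ℕ) + 1
  | Sum.inr p, Sum.inl k => (k : ℕ) = (p.1 : ℕ) + 1
  | _, _ => False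

/-- The caterpillar tree `Cat(d 1, …, d ℓ)` with spine `x_0, …, x_{ℓ+1}`, in which
the spine vertex `x_i` has degree `d i` for `1 ≤ i ≤ ℓ` (provided `d i ≥ 2`). -/
def Cat (ℓ : ℕ) (d : ℕ → ℕ) : SimpleGraph (CatV ℓ d) :=
  SimpleGraph.fromRel (CatRel ℓ d)

/-- There exists a strong edge-coloring `φ` of `Cat ℓ d` using colors from `C` with
`φ(E 1) = C₁`, `φ(E ℓ) = Cl`, `φ(x₀x₁) = α₀` and `φ(x_ℓ x_{ℓ+1}) = αl`. -/
def CatPrecolorExists (ℓ : ℕ) (d : ℕ → ℕ) (C C₁ Cl : Finset ℕ) (α₀ αl : ℕ) : Prop :=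
  ∃ φ : Sym2 (CatV ℓ d) → ℕ,
    (∀ e ∈ (Cat ℓ d).edgeSet, φ e ∈ C) ∧
    IsStrongEdgeColoring (Cat ℓ d) φ ∧
    φ '' Einc (Cat ℓ d) (Sum.inl ⟨1, by omega⟩) = ↑C₁ ∧
    φ '' Einc (Cat ℓ d) (Sum.inl ⟨ℓ, by omega⟩) = ↑Cl ∧
    φ s(Sum.inl ⟨0, by omega⟩, Sum.inl ⟨1, by omega⟩) = α₀ ∧
    φ s(Sum.inl ⟨ℓ, by omega⟩, Sum.inl ⟨ℓ + 1, by omega⟩) = αl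

/-- `Cat ℓ d` is `κ`-two-sided strong edge-pre-colorable: for every `κ`-set `C` of colors,
all `C₁, Cl ⊆ C` with `|C₁| = d 1`, `|Cl| = d ℓ`, and all `α₀ ∈ C₁`, `αl ∈ Cl`, there is
a strong edge-coloring `φ` of `Cat ℓ d` with colors from `C` such that `φ(E 1) = C₁`,
`φ(E ℓ) = Cl`, `φ(x₀x₁) = α₀` and `φ(x_ℓ x_{ℓ+1}) = αl`. -/
def TwoSidedPrecolorable (ℓ : ℕ) (d : ℕ → ℕ) (κ : ℕ) : Prop :=
  ∀ C C₁ Cl : Finset ℕ, C.card = κ → C₁ ⊆ C → Cl ⊆ C →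
    C₁.card = d 1 → Cl.card = d ℓ →
    ∀ α₀ ∈ C₁, ∀ αl ∈ Cl, CatPrecolorExists ℓ d C C₁ Cl α₀ αl

/-- `ℓ_σ` from the refined key lemma: `ℓ_5 = 8`, `ℓ_6 = ℓ_7 = 7`, `ℓ_σ = σ` for `σ ≥ 8`. -/
def ellSigma (s : ℕ) : ℕ :=
  if s = 5 then 8 else if s ≤ 7 then 7 else s


-- ===== auxiliary lemmas =====

section catgen
variable {ℓ : ℕ} {D : ℕ → ℕ}

lemma cat_adj_inl_inl {i j : Fin (ℓ+2)} :
    (Cat ℓ D).Adj (Sum.inl i) (Sum.inl j) ↔ ((j:ℕ) = i+1 ∨ (i:ℕ) = j+1) := by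
  simp only [Cat, SimpleGraph.fromRel_adj, CatRel]
  constructor
  · rintro ⟨-, h⟩; exact h
  · intro h
    refine ⟨?_, h⟩
    intro he
    have : i = j := by injection he
    subst this; omega

lemma cat_adj_inl_inr {i : Fin (ℓ+2)} {p : Σ i : Fin ℓ, Fin (D (i.val + 1) - 2)} :
    (Cat ℓ D).Adj (Sum.inl i) (Sum.inr p) ↔ (i:ℕ) = p.1 + 1 := by
  simp only [Cat, SimpleGraph.fromRel_adj, CatRel]
  constructor
  · rintro ⟨-, h | h⟩; exact absurd h not_false; exact h
  · intro h; exact ⟨by simp, Or.inr h⟩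

lemma cat_adj_inr_inl {i : Fin (ℓ+2)} {p : Σ i : Fin ℓ, Fin (D (i.val + 1) - 2)} :
    (Cat ℓ D).Adj (Sum.inr p) (Sum.inl i) ↔ (i:ℕ) = p.1 + 1 := by
  rw [SimpleGraph.adj_comm]; exact cat_adj_inl_inr

lemma cat_not_adj_inr_inr {p q : Σ i : Fin ℓ, Fin (D (i.val + 1) - 2)} :
    ¬ (Cat ℓ D).Adj (Sum.inr p) (Sum.inr q) := by
  simp [Cat, SimpleGraph.fromRel_adj, CatRel]

/-- the neighbor finset of an interior spine vertex -/
def spineNbhd (ℓ : ℕ) (D : ℕ → ℕ) (i : Fin (ℓ+2)) (h1 : 1 ≤ (i:ℕ)) (h2 : (i:ℕ) ≤ ℓ) :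
    Finset (CatV ℓ D) :=
  ({Sum.inl ⟨(i:ℕ)-1, by omega⟩, Sum.inl ⟨(i:ℕ)+1, by omega⟩} : Finset (CatV ℓ D)) ∪
    Finset.image (fun j : Fin (D ((i:ℕ)-1+1) - 2) => Sum.inr ⟨⟨(i:ℕ)-1, by omega⟩, j⟩)
      Finset.univ

lemma neighborSet_spine (i : Fin (ℓ+2)) (h1 : 1 ≤ (i:ℕ)) (h2 : (i:ℕ) ≤ ℓ) :
    (Cat ℓ D).neighborSet (Sum.inl i) = ↑(spineNbhd ℓ D i h1 h2) := by
  ext v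
  cases v with
  | inl j =>
    simp only [SimpleGraph.mem_neighborSet, cat_adj_inl_inl, spineNbhd, Finset.coe_union,
      Set.mem_union, Finset.coe_insert, Finset.coe_singleton, Set.mem_insert_iff,
      Set.mem_singleton_iff, Finset.coe_image, Set.mem_image, Finset.mem_coe,
      Finset.mem_univ]
    constructor
    · intro h
      left
      rcases h with h | h
      · right; apply Sum.inl.injEq .. |>.mpr; apply Fin.ext; simp; omega
      · left; apply Sum.inl.injEq .. |>.mpr; apply Fin.ext; simp; omega
    · rintro ((h | h) | h)
      · have hj := congrArg Fin.val (Sum.inl.injEq .. |>.mp h)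
        simp only [Fin.val_mk] at hj; omega
      · have hj := congrArg Fin.val (Sum.inl.injEq .. |>.mp h)
        simp only [Fin.val_mk] at hj; omega
      · obtain ⟨a, -, ha⟩ := h; exact absurd ha (by simp)
  | inr p =>
    simp only [SimpleGraph.mem_neighborSet, cat_adj_inl_inr, spineNbhd, Finset.coe_union,
      Set.mem_union, Finset.coe_insert, Finset.coe_singleton, Set.mem_insert_iff,
      Set.mem_singleton_iff, Finset.coe_image, Set.mem_image, Finset.mem_coe,
      Finset.mem_univ]
    constructor
    · intro h
      right
      obtain ⟨a, b⟩ := p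
      have hb : (i:ℕ) - 1 < ℓ := by omega
      have key : (⟨(i:ℕ)-1, hb⟩ : Fin ℓ) = a := by
        apply Fin.ext; simp at h ⊢; omega
      subst key
      exact ⟨b, trivial, rfl⟩
    · rintro (h | ⟨a, -, ha⟩)
      · rcases h with h | h <;> exact absurd h (by simp)
      · obtain ⟨a', b'⟩ := p
        injection ha with ha'
        injection ha' with h1' h2'
        have := congrArg Fin.val h1'
        simp only [Fin.val_mk] at this
        show (i:ℕ) = (a' : ℕ) + 1
        omega

lemma ndeg_spine (i : Fin (ℓ+2)) (h1 : 1 ≤ (i:ℕ)) (h2 : (i:ℕ) ≤ ℓ) (hD : 2 ≤ D (i:ℕ)) :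
    ndeg (Cat ℓ D) (Sum.inl i) = D (i:ℕ) := by
  rw [ndeg, neighborSet_spine i h1 h2, Set.ncard_coe_finset, spineNbhd]
  rw [Finset.card_union_of_disjoint (by simp [Finset.disjoint_left])]
  rw [Finset.card_image_of_injective _ (fun a b hab => by
    simpa using (Sum.inr.injEq .. |>.mp hab))]
  have h3 : (i:ℕ) - 1 + 1 = (i:ℕ) := by omega
  rw [h3]
  have : ({Sum.inl ⟨(i:ℕ)-1, by omega⟩, Sum.inl ⟨(i:ℕ)+1, by omega⟩} :
      Finset (CatV ℓ D)).card = 2 := by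
    rw [Finset.card_insert_of_notMem (by
      simp only [Finset.mem_singleton]
      intro h
      have := congrArg Fin.val (Sum.inl.injEq .. |>.mp h)
      simp only [Fin.mk.injEq] at this; omega), Finset.card_singleton]
  rw [this, Finset.card_univ, Fintype.card_fin]
  omega

lemma neighborSet_x0 :
    (Cat ℓ D).neighborSet (Sum.inl (⟨0, by omega⟩ : Fin (ℓ+2))) =
      {Sum.inl ⟨1, by omega⟩} := by
  ext v
  cases v with
  | inl j =>
    simp only [SimpleGraph.mem_neighborSet, cat_adj_inl_inl, Set.mem_singleton_iff,
      Fin.val_mk, Sum.inl.injEq]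
    constructor
    · rintro (h | h)
      · exact Fin.ext (show (j:ℕ) = 1 by omega)
      · omega
    · intro h; subst h; left; simp
  | inr p =>
    simp only [SimpleGraph.mem_neighborSet, cat_adj_inl_inr, Set.mem_singleton_iff,
      Fin.val_mk]
    constructor
    · intro h; omega
    · intro h; exact absurd h (by simp)

lemma neighborSet_xlast :
    (Cat ℓ D).neighborSet (Sum.inl (⟨ℓ+1, by omega⟩ : Fin (ℓ+2))) =
      {Sum.inl ⟨ℓ, by omega⟩} := by
  ext v
  cases v with
  | inl j =>
    simp only [SimpleGraph.mem_neighborSet, cat_adj_inl_inl, Set.mem_singleton_iff,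
      Fin.val_mk, Sum.inl.injEq]
    constructor
    · rintro (h | h)
      · exact absurd h (by have := j.isLt; omega)
      · exact Fin.ext (show (j:ℕ) = ℓ by omega)
    · intro h; subst h; right; simp
  | inr p =>
    simp only [SimpleGraph.mem_neighborSet, cat_adj_inl_inr, Set.mem_singleton_iff,
      Fin.val_mk]
    constructor
    · intro h; have := p.1.isLt; omega
    · intro h; exact absurd h (by simp)

lemma neighborSet_leaf (p : Σ i : Fin ℓ, Fin (D (i.val + 1) - 2)) :
    (Cat ℓ D).neighborSet (Sum.inr p) =
      {Sum.inl (⟨p.1 + 1, by have := p.1.isLt; omega⟩ : Fin (ℓ+2))} := by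
  ext v
  cases v with
  | inl j =>
    simp only [SimpleGraph.mem_neighborSet, cat_adj_inr_inl, Set.mem_singleton_iff,
      Sum.inl.injEq]
    constructor
    · intro h; exact Fin.ext (by simpa using h)
    · intro h; subst h; simp
  | inr q =>
    simp only [SimpleGraph.mem_neighborSet, Set.mem_singleton_iff]
    constructor
    · intro h; exact absurd h cat_not_adj_inr_inr
    · intro h; exact absurd h (by simp)

lemma ndeg_x0 : ndeg (Cat ℓ D) (Sum.inl (⟨0, by omega⟩ : Fin (ℓ+2))) = 1 := by
  rw [ndeg, neighborSet_x0, Set.ncard_singleton]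

lemma ndeg_xlast : ndeg (Cat ℓ D) (Sum.inl (⟨ℓ+1, by omega⟩ : Fin (ℓ+2))) = 1 := by
  rw [ndeg, neighborSet_xlast, Set.ncard_singleton]

lemma ndeg_leaf (p : Σ i : Fin ℓ, Fin (D (i.val + 1) - 2)) :
    ndeg (Cat ℓ D) (Sum.inr p) = 1 := by
  rw [ndeg, neighborSet_leaf, Set.ncard_singleton]

end catgen

section inc
variable {V : Type*} (G : SimpleGraph V)

lemma ncard_incidenceSet (v : V) :
    (G.incidenceSet v).ncard = ndeg G v := by
  classical
  rw [ndeg, ← Nat.card_coe_set_eq, ← Nat.card_coe_set_eq]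
  exact Nat.card_congr (G.incidenceSetEquivNeighborSet v)

lemma Einc_eq_incidenceSet (v : V) : Einc G v = G.incidenceSet v := rfl

end inc

section strong
variable {V : Type*} {G : SimpleGraph V} {φ : Sym2 V → ℕ}

lemma near_of_mem_inc {v w : V} {e f : Sym2 V} (hvw : v = w ∨ G.Adj v w)
    (he : e ∈ G.incidenceSet v) (hf : f ∈ G.incidenceSet w) : EdgesNear G e f :=
  ⟨v, w, he.2, hf.2, hvw⟩

lemma injOn_of_strong (hs : IsStrongEdgeColoring G φ) {v w : V}
    (hvw : v = w ∨ G.Adj v w) :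
    Set.InjOn φ (G.incidenceSet v ∪ G.incidenceSet w) := by
  intro e he f hf hef
  by_contra hne
  have hnear : EdgesNear G e f := by
    rcases he with he | he <;> rcases hf with hf | hf
    · exact near_of_mem_inc (Or.inl rfl) he hf
    · exact near_of_mem_inc hvw he hf
    · rcases hvw with h | h
      · exact near_of_mem_inc (Or.inl h.symm) he hf
      · exact near_of_mem_inc (Or.inr h.symm) he hf
    · exact near_of_mem_inc (Or.inl rfl) he hf
  have hee : e ∈ G.edgeSet := by
    rcases he with he | he <;> exact he.1
  have hfe : f ∈ G.edgeSet := by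
    rcases hf with hf | hf <;> exact hf.1
  exact hs e hee f hfe hne hnear hef

end strong

abbrev LL (d : ℕ) : ℕ := 2 * d - 2 - 1
abbrev Dfun (d : ℕ) : ℕ → ℕ := fun i => if Odd i then d - 1 else d

section main
variable {d : ℕ}

noncomputable def Aset (d : ℕ) (φ : Sym2 (CatV (LL d) (Dfun d)) → ℕ) (i : ℕ) : Set ℕ :=
  φ '' ((Cat (LL d) (Dfun d)).incidenceSet
    (Sum.inl ⟨i % (LL d + 2), Nat.mod_lt _ (by omega)⟩))

noncomputable def cSpine (d : ℕ) (φ : Sym2 (CatV (LL d) (Dfun d)) → ℕ) (i : ℕ) : ℕ :=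
  φ s(Sum.inl ⟨i % (LL d + 2), Nat.mod_lt _ (by omega)⟩,
      Sum.inl ⟨(i+1) % (LL d + 2), Nat.mod_lt _ (by omega)⟩)

variable {φ : Sym2 (CatV (LL d) (Dfun d)) → ℕ}

lemma Aset_eq (φ : Sym2 (CatV (LL d) (Dfun d)) → ℕ) {i : ℕ} (h : i < LL d + 2) :
    Aset d φ i = φ '' ((Cat (LL d) (Dfun d)).incidenceSet (Sum.inl ⟨i, h⟩)) := by
  have : (⟨i % (LL d + 2), Nat.mod_lt _ (by omega)⟩ : Fin (LL d + 2)) = ⟨i, h⟩ :=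
    Fin.ext (Nat.mod_eq_of_lt h)
  rw [Aset, this]

lemma cSpine_eq (φ : Sym2 (CatV (LL d) (Dfun d)) → ℕ) {i : ℕ} (h : i < LL d + 2)
    (h' : i + 1 < LL d + 2) :
    cSpine d φ i = φ s(Sum.inl ⟨i, h⟩, Sum.inl ⟨i+1, h'⟩) := by
  have e1 : (⟨i % (LL d + 2), Nat.mod_lt _ (by omega)⟩ : Fin (LL d + 2)) = ⟨i, h⟩ :=
    Fin.ext (Nat.mod_eq_of_lt h)
  have e2 : (⟨(i+1) % (LL d + 2), Nat.mod_lt _ (by omega)⟩ : Fin (LL d + 2)) = ⟨i+1, h'⟩ :=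
    Fin.ext (Nat.mod_eq_of_lt h')
  rw [cSpine, e1, e2]

lemma Dfun_sum (hd : 5 ≤ d) (i : ℕ) : Dfun d i + Dfun d (i+1) = 2*d - 1 := by
  rcases Nat.even_or_odd i with he | ho
  · have h1' : ¬ Odd i := Nat.not_odd_iff_even.mpr he
    have h2' : Odd (i+1) := he.add_one
    simp only [Dfun, if_neg h1', if_pos h2']
    omega
  · have h2' : ¬ Odd (i+1) := Nat.not_odd_iff_even.mpr ho.add_one
    simp only [Dfun, if_pos ho, if_neg h2']
    omega

lemma Dfun_ge (hd : 5 ≤ d) (i : ℕ) : 2 ≤ Dfun d i := by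
  simp only [Dfun]; split <;> omega

lemma fact1 (hd : 5 ≤ d) (hs : IsStrongEdgeColoring (Cat (LL d) (Dfun d)) φ)
    (hC : ∀ e ∈ (Cat (LL d) (Dfun d)).edgeSet, φ e ∈ Finset.Icc 1 (2*d-2))
    {i : ℕ} (h1 : 1 ≤ i) (h2 : i + 1 ≤ LL d) :
    Aset d φ i ∪ Aset d φ (i+1) = ↑(Finset.Icc 1 (2*d-2)) := by
  have hiv : i < LL d + 2 := by omega
  have hi1v : i + 1 < LL d + 2 := by omega
  have hadj : (Cat (LL d) (Dfun d)).Adj (Sum.inl ⟨i, hiv⟩) (Sum.inl ⟨i+1, hi1v⟩) :=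
    cat_adj_inl_inl.mpr (Or.inl rfl)
  rw [Aset_eq φ hiv, Aset_eq φ hi1v, ← Set.image_union]
  set G := Cat (LL d) (Dfun d) with hG
  set s := G.incidenceSet (Sum.inl ⟨i, hiv⟩) with hsdef
  set t := G.incidenceSet (Sum.inl ⟨i+1, hi1v⟩) with htdef
  have hninter : (s ∩ t).ncard = 1 := by
    rw [hsdef, htdef, G.incidenceSet_inter_incidenceSet_of_adj hadj, Set.ncard_singleton]
  have hn1 : s.ncard = Dfun d i := by
    rw [hsdef, ncard_incidenceSet,
      ndeg_spine ⟨i, hiv⟩ h1 (show i ≤ LL d by omega) (Dfun_ge hd i)]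
  have hn2 : t.ncard = Dfun d (i+1) := by
    rw [htdef, ncard_incidenceSet,
      ndeg_spine ⟨i+1, hi1v⟩ (show 1 ≤ i+1 by omega) (show i+1 ≤ LL d from h2)
        (Dfun_ge hd (i+1))]
  have hsum := Dfun_sum hd i
  have huni : (s ∪ t).ncard = 2*d - 2 := by
    have h := Set.ncard_union_add_ncard_inter s t (Set.toFinite _) (Set.toFinite _)
    omega
  have himg : (φ '' (s ∪ t)).ncard = 2*d - 2 := by
    rw [Set.ncard_image_of_injOn (injOn_of_strong hs (Or.inr hadj)), huni]
  apply Set.eq_of_subset_of_ncard_le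
  · rintro a ⟨e, he, rfl⟩
    refine Finset.mem_coe.mpr (hC e ?_)
    rcases he with he | he <;> exact he.1
  · rw [Set.ncard_coe_finset, Nat.card_Icc, himg]; omega
  · exact (Finset.Icc 1 (2*d-2)).finite_toSet

lemma fact2 (hs : IsStrongEdgeColoring (Cat (LL d) (Dfun d)) φ)
    {i : ℕ} (h1 : 1 ≤ i) (h2 : i + 1 ≤ LL d) :
    ∀ a ∈ Aset d φ i ∩ Aset d φ (i+1), a = cSpine d φ i := by
  have hiv : i < LL d + 2 := by omega
  have hi1v : i + 1 < LL d + 2 := by omega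
  have hadj : (Cat (LL d) (Dfun d)).Adj (Sum.inl ⟨i, hiv⟩) (Sum.inl ⟨i+1, hi1v⟩) :=
    cat_adj_inl_inl.mpr (Or.inl rfl)
  rintro a ⟨ha1, ha2⟩
  rw [Aset_eq φ hiv] at ha1
  rw [Aset_eq φ hi1v] at ha2
  obtain ⟨e, he, rfl⟩ := ha1
  obtain ⟨f, hf, hef⟩ := ha2
  have hfe : f = e := injOn_of_strong hs (Or.inr hadj) (Or.inr hf) (Or.inl he) hef
  subst hfe
  have : f ∈ ({s(Sum.inl ⟨i, hiv⟩, Sum.inl ⟨i+1, hi1v⟩)} :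
      Set (Sym2 (CatV (LL d) (Dfun d)))) := by
    rw [← (Cat (LL d) (Dfun d)).incidenceSet_inter_incidenceSet_of_adj hadj]
    exact ⟨he, hf⟩
  rw [Set.mem_singleton_iff] at this
  rw [this, cSpine_eq φ hiv hi1v]

lemma fact3 (hd : 5 ≤ d) (hs : IsStrongEdgeColoring (Cat (LL d) (Dfun d)) φ)
    (hC : ∀ e ∈ (Cat (LL d) (Dfun d)).edgeSet, φ e ∈ Finset.Icc 1 (2*d-2))
    {i : ℕ} (h1 : 1 ≤ i) (h2 : i + 2 ≤ LL d) :
    ∀ a ∈ Aset d φ i, a ≠ cSpine d φ i → a ∈ Aset d φ (i+2) := by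
  intro a ha hne
  have haC : a ∈ (↑(Finset.Icc 1 (2*d-2)) : Set ℕ) := by
    rw [← fact1 hd hs hC h1 (by omega)]
    exact Or.inl ha
  have hnotA1 : a ∉ Aset d φ (i+1) := fun hmem => hne (fact2 hs h1 (by omega) a ⟨ha, hmem⟩)
  have := fact1 hd hs hC (i := i+1) (by omega) (by omega)
  rw [← this] at haC
  rcases haC with h | h
  · exact absurd h hnotA1
  · have he2 : i + 1 + 1 = i + 2 := by omega
    rwa [he2] at h

lemma main_contra (hd : 5 ≤ d)
    (hC : ∀ e ∈ (Cat (LL d) (Dfun d)).edgeSet, φ e ∈ Finset.Icc 1 (2*d-2))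
    (hs : IsStrongEdgeColoring (Cat (LL d) (Dfun d)) φ)
    (hA1 : φ '' ((Cat (LL d) (Dfun d)).incidenceSet (Sum.inl ⟨1, by omega⟩))
      = ↑(Finset.Icc 1 (d-1)))
    (hAl : φ '' ((Cat (LL d) (Dfun d)).incidenceSet (Sum.inl ⟨LL d, by omega⟩))
      = ↑(Finset.Icc d (2*d-2))) :
    False := by
  have hL : LL d = 2*d-2-1 := rfl
  have hA1' : Aset d φ 1 = ↑(Finset.Icc 1 (d-1)) := by
    rw [Aset_eq φ (show 1 < LL d + 2 by omega)]; exact hA1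
  have hfinC1 : (↑(Finset.Icc 1 (d-1)) : Set ℕ).Finite := (Finset.Icc 1 (d-1)).finite_toSet
  have ind : ∀ k, 1 + 2*k ≤ LL d →
      ((↑(Finset.Icc 1 (d-1)) : Set ℕ) \ Aset d φ (1+2*k)).ncard ≤ k := by
    intro k
    induction k with
    | zero =>
      intro _
      have h0 : 1 + 2*0 = 1 := by omega
      rw [h0, hA1', Set.diff_self, Set.ncard_empty]
    | succ k ih =>
      intro hk
      have hk' : 1 + 2*k ≤ LL d := by omega
      have hsub : ((↑(Finset.Icc 1 (d-1)) : Set ℕ) \ Aset d φ (1+2*(k+1))) ⊆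
          ((↑(Finset.Icc 1 (d-1)) : Set ℕ) \ Aset d φ (1+2*k)) ∪ {cSpine d φ (1+2*k)} := by
        rintro a ⟨haC, hnot⟩
        by_cases hmem : a ∈ Aset d φ (1+2*k)
        · by_cases hne : a = cSpine d φ (1+2*k)
          · exact Or.inr (by simp [hne])
          · exfalso
            apply hnot
            have h3 := fact3 hd hs hC (i := 1+2*k) (by omega) (by omega) a hmem hne
            have hidx : 1+2*k+2 = 1+2*(k+1) := by ring
            rwa [hidx] at h3
        · exact Or.inl ⟨haC, hmem⟩
      have hfin2 : (((↑(Finset.Icc 1 (d-1)) : Set ℕ) \ Aset d φ (1+2*k)) ∪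
          {cSpine d φ (1+2*k)}).Finite :=
        (hfinC1.subset Set.diff_subset).union (Set.finite_singleton _)
      have h1' := Set.ncard_le_ncard hsub hfin2
      have h2' := Set.ncard_union_le ((↑(Finset.Icc 1 (d-1)) : Set ℕ) \ Aset d φ (1+2*k))
        {cSpine d φ (1+2*k)}
      have h3' := ih hk'
      have h4' : ({cSpine d φ (1+2*k)} : Set ℕ).ncard = 1 := Set.ncard_singleton _
      omega
  have hfin := ind (d-2) (by omega)
  have hidx : 1 + 2*(d-2) = LL d := by omega
  rw [hidx] at hfin
  have hAl' : Aset d φ (LL d) = ↑(Finset.Icc d (2*d-2)) := by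
    rw [Aset_eq φ (show LL d < LL d + 2 by omega)]; exact hAl
  rw [hAl'] at hfin
  have hdiff : ((↑(Finset.Icc 1 (d-1)) : Set ℕ) \ ↑(Finset.Icc d (2*d-2)))
      = (↑(Finset.Icc 1 (d-1)) : Set ℕ) := by
    ext a
    simp only [Set.mem_diff, Finset.coe_Icc, Set.mem_Icc]
    omega
  rw [hdiff, Set.ncard_coe_finset, Nat.card_Icc] at hfin
  omega

lemma ndeg_le_d (hd : 5 ≤ d) (v : CatV (LL d) (Dfun d)) :
    ndeg (Cat (LL d) (Dfun d)) v ≤ d := by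
  have hL : LL d = 2*d-2-1 := rfl
  cases v with
  | inl i =>
    rcases Nat.eq_zero_or_pos i.val with h0 | h1
    · have hi : i = ⟨0, by omega⟩ := Fin.ext h0
      rw [hi, ndeg_x0]; omega
    by_cases h2 : i.val ≤ LL d
    · rw [ndeg_spine i h1 h2 (Dfun_ge hd _)]
      simp only [Dfun]; split <;> omega
    · have hi : i = ⟨LL d + 1, by omega⟩ :=
        Fin.ext (show (i:ℕ) = LL d + 1 by have := i.isLt; omega)
      rw [hi, ndeg_xlast]; omega
  | inr p => rw [ndeg_leaf]; omega

lemma ndeg_consec (hd : 5 ≤ d) (i j : Fin (LL d + 2)) (hij : (j:ℕ) = (i:ℕ) + 1) :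
    ndeg (Cat (LL d) (Dfun d)) (Sum.inl i) + ndeg (Cat (LL d) (Dfun d)) (Sum.inl j)
      ≤ 2*d - 1 := by
  have hL : LL d = 2*d-2-1 := rfl
  rcases Nat.eq_zero_or_pos i.val with h0 | h1
  · have hi : i = ⟨0, by omega⟩ := Fin.ext h0
    rw [hi, ndeg_x0]
    have := ndeg_le_d hd (Sum.inl j)
    omega
  by_cases h2 : (j:ℕ) ≤ LL d
  · rw [ndeg_spine i h1 (by omega) (Dfun_ge hd _),
      ndeg_spine j (by omega) h2 (Dfun_ge hd _), hij]
    have := Dfun_sum hd (i:ℕ)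
    omega
  · have hj : j = ⟨LL d + 1, by omega⟩ :=
        Fin.ext (show (j:ℕ) = LL d + 1 by have := j.isLt; omega)
    rw [hj, ndeg_xlast]
    have := ndeg_le_d hd (Sum.inl i)
    omega

lemma sum_bound (hd : 5 ≤ d) {x y : CatV (LL d) (Dfun d)}
    (h : (Cat (LL d) (Dfun d)).Adj x y) :
    ndeg (Cat (LL d) (Dfun d)) x + ndeg (Cat (LL d) (Dfun d)) y ≤ 2*d - 1 := by
  cases x with
  | inl i =>
    cases y with
    | inl j =>
      rcases cat_adj_inl_inl.mp h with hc | hc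
      · exact ndeg_consec hd i j hc
      · have := ndeg_consec hd j i hc; omega
    | inr p =>
      rw [ndeg_leaf]
      have := ndeg_le_d hd (Sum.inl i)
      omega
  | inr p =>
    cases y with
    | inl j =>
      rw [ndeg_leaf]
      have := ndeg_le_d hd (Sum.inl j)
      omega
    | inr q => exact absurd h cat_not_adj_inr_inr

lemma mem_sigma_set (hd : 5 ≤ d) :
    2*d - 2 ∈ {m | ∃ x y, (Cat (LL d) (Dfun d)).Adj x y ∧
      m = ndeg (Cat (LL d) (Dfun d)) x + ndeg (Cat (LL d) (Dfun d)) y - 1} := by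
  have hL : LL d = 2*d-2-1 := rfl
  refine ⟨Sum.inl ⟨1, by omega⟩, Sum.inl ⟨2, by omega⟩, cat_adj_inl_inl.mpr (Or.inl rfl), ?_⟩
  rw [ndeg_spine ⟨1, by omega⟩ (by norm_num) (by show 1 ≤ LL d; omega) (Dfun_ge hd _),
    ndeg_spine ⟨2, by omega⟩ (by norm_num) (by show 2 ≤ LL d; omega) (Dfun_ge hd _)]
  have e1 : Dfun d 1 = d - 1 := if_pos ⟨0, by omega⟩
  have e2 : Dfun d 2 = d := if_neg (by rintro ⟨k, hk⟩; omega)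
  show 2*d-2 = Dfun d 1 + Dfun d 2 - 1
  omega

lemma sigma_eq (hd : 5 ≤ d) : sigmaG (Cat (LL d) (Dfun d)) = 2*d - 2 := by
  have hbdd : ∀ m ∈ {m | ∃ x y, (Cat (LL d) (Dfun d)).Adj x y ∧
      m = ndeg (Cat (LL d) (Dfun d)) x + ndeg (Cat (LL d) (Dfun d)) y - 1}, m ≤ 2*d-2 := by
    rintro m ⟨x, y, hadj, rfl⟩
    have := sum_bound hd hadj
    omega
  apply le_antisymm
  · exact csSup_le ⟨2*d-2, mem_sigma_set hd⟩ hbdd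
  · exact le_csSup ⟨2*d-2, hbdd⟩ (mem_sigma_set hd)

end main

theorem not_twoSided_even_sigma (d : ℕ) (hd : 5 ≤ d) :
    ¬ CatPrecolorExists (2 * d - 2 - 1) (fun i => if Odd i then d - 1 else d)
        (Finset.Icc 1 (2 * d - 2)) (Finset.Icc 1 (d - 1)) (Finset.Icc d (2 * d - 2)) 1 d ∧
    ¬ TwoSidedPrecolorable (2 * d - 2 - 1) (fun i => if Odd i then d - 1 else d) (2 * d - 2) ∧
    sigmaG (Cat (2 * d - 2 - 1) (fun i => if Odd i then d - 1 else d)) = 2 * d - 2 := by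
  have part1 : ¬ CatPrecolorExists (2 * d - 2 - 1) (fun i => if Odd i then d - 1 else d)
      (Finset.Icc 1 (2 * d - 2)) (Finset.Icc 1 (d - 1)) (Finset.Icc d (2 * d - 2)) 1 d := by
    rintro ⟨φ, hC, hs, hA1, hAl, -, -⟩
    exact main_contra hd hC hs hA1 hAl
  refine ⟨part1, ?_, sigma_eq hd⟩
  intro h
  apply part1
  refine h (Finset.Icc 1 (2*d-2)) (Finset.Icc 1 (d-1)) (Finset.Icc d (2*d-2))
    (by rw [Nat.card_Icc]; omega)
    (Finset.Icc_subset_Icc le_rfl (by omega))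
    (Finset.Icc_subset_Icc (by omega) le_rfl)
    ?_ ?_ 1 ?_ d ?_
  · show (Finset.Icc 1 (d-1)).card = if Odd 1 then d - 1 else d
    rw [Nat.card_Icc, if_pos ⟨0, by omega⟩]
    omega
  · show (Finset.Icc d (2*d-2)).card = if Odd (2*d-2-1) then d - 1 else d
    rw [Nat.card_Icc, if_pos ⟨d-2, by omega⟩]
    omega
  · simp only [Finset.mem_Icc]; omega
  · simp only [Finset.mem_Icc]; omega
end

section
/- The caterpillar tree Cat(4,3,4,3,4,3) (of length 6, with σ = 6) is 6-two-sided strong edge-pre-colorable. -/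
open SimpleGraph

/-! Relabelling the colours, we may assume `C = {0, …, 5}`, `C₁ = {0, 1, 2, 3}` and `α₀ = 0`.
With `σ = 6` colours, the six edges at two consecutive spine vertices `x_i, x_{i+1}` receive all six
colours, so the pendant colours at `x_{i+1}` are exactly the colours missing at `x_i` apart from the
next spine colour: a colouring is determined by its spine. Two edges at distance at most two always
lie at a common pair of consecutive spine vertices, so strength is checked on these five windows.
For each of the 60 pairs `(C_ℓ, α_ℓ)` a finite search then finds spine colours
`s₁ ∈ C₁ ∖ {α₀}`, `s₂ ∉ C₁`, `s₃ ∈ (C₁ ∖ {s₁}) ∩ (C_ℓ ∖ {s₅})`, `s₄ ∉ C_ℓ`, `s₅ ∈ C_ℓ ∖ {α_ℓ}`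
whose forced colouring is rainbow on every window. -/

open Finset

instance {V : Type*} [Fintype V] [DecidableEq V] (G : SimpleGraph V) [DecidableRel G.Adj] :
    DecidableRel (EdgesNear G) := fun e f =>
  inferInstanceAs (Decidable (∃ u v, u ∈ e ∧ v ∈ f ∧ (u = v ∨ G.Adj u v)))

instance {V : Type*} [DecidableEq V] (G : SimpleGraph V) [DecidableRel G.Adj] (v : V) :
    DecidablePred (· ∈ Einc G v) := fun e =>
  inferInstanceAs (Decidable (e ∈ G.edgeSet ∧ v ∈ e))

theorem IsStrongEdgeColoring.comp {V α β : Type*} {G : SimpleGraph V} {φ : Sym2 V → α}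
    (hφ : IsStrongEdgeColoring G φ) {f : α → β} (hf : Function.Injective f) :
    IsStrongEdgeColoring G (f ∘ φ) :=
  fun e he e' he' hne hnear => hf.ne (hφ e he e' he' hne hnear)

theorem exists_injective_image_eq {α : Type*} [DecidableEq α] {C C₁ : Finset α}
    (hC : #C = 6) (h₁ : C₁ ⊆ C) (hC₁ : #C₁ = 4) {a : α} (ha : a ∈ C₁) :
    ∃ f : Fin 6 → α, Function.Injective f ∧ univ.image f = C ∧
      ({0, 1, 2, 3} : Finset (Fin 6)).image f = C₁ ∧ f 0 = a := by
  obtain ⟨x, y, z, -, -, -, hxyz⟩ :=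
    card_eq_three.mp (by rw [card_erase_of_mem ha, hC₁] : #(C₁.erase a) = 3)
  obtain ⟨u, v, -, huv⟩ := card_eq_two.mp (by rw [card_sdiff_of_subset h₁, hC, hC₁] : #(C \ C₁) = 2)
  have himage₁ : ({0, 1, 2, 3} : Finset (Fin 6)).image ![a, x, y, z, u, v] = C₁ := by
    rw [← insert_erase ha, hxyz]
    simp [image_insert]
  have himage : univ.image ![a, x, y, z, u, v] = C := by
    rw [show (univ : Finset (Fin 6)) = {0, 1, 2, 3} ∪ {4, 5} by decide, image_union, himage₁,
      ← union_sdiff_of_subset h₁, huv]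
    simp [image_insert]
  refine ⟨_, ?_, himage, himage₁, rfl⟩
  rw [← Set.injOn_univ, ← coe_univ, ← card_image_iff, himage, hC, card_univ, Fintype.card_fin]

section Caterpillar

variable {α : Type*}

instance (ℓ : ℕ) (d : ℕ → ℕ) : DecidableRel (CatRel ℓ d)
  | Sum.inl _, Sum.inl _ => inferInstanceAs (Decidable (_ = _))
  | Sum.inr _, Sum.inl _ => inferInstanceAs (Decidable (_ = _))
  | Sum.inl _, Sum.inr _ => instDecidableFalse
  | Sum.inr _, Sum.inr _ => instDecidableFalse

instance (ℓ : ℕ) (d : ℕ → ℕ) : DecidableRel (Cat ℓ d).Adj := fun u v =>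
  decidable_of_iff' _ (fromRel_adj (CatRel ℓ d) u v)

/-- The edge colouring of `Cat ℓ d` giving colour `s i` to the spine edge `x_i x_{i+1}` and
colour `t i j` to the `j`-th pendant edge at `x_i`; the value on non-edges is irrelevant. -/
def catColoring {ℓ : ℕ} {d : ℕ → ℕ} (s : ℕ → α) (t : ℕ → ℕ → α) : Sym2 (CatV ℓ d) → α :=
  Sym2.lift ⟨fun
    | Sum.inl i, Sum.inl j => s (min i j)
    | Sum.inl _, Sum.inr p | Sum.inr p, Sum.inl _ => t (p.1 + 1) p.2
    | Sum.inr _, Sum.inr _ => s 0,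
    by rintro (i | p) (j | q) <;> simp [min_comm]⟩

abbrev catDeg : ℕ → ℕ := fun i => if Odd i then 4 else 3

local notation "V" => CatV 6 catDeg

def spineEdge (i : Fin 7) : Sym2 V := s(Sum.inl i.castSucc, Sum.inl i.succ)

def pendantEdge (i : Fin 6) (j : Fin (catDeg (i + 1) - 2)) : Sym2 V :=
  s(Sum.inr ⟨i, j⟩, Sum.inl i.succ.castSucc)

/-- The edges at `x_{i+1}`, the spine edges first. -/
def edgesAt (i : Fin 6) : List (Sym2 V) :=
  spineEdge i.castSucc :: spineEdge i.succ :: (List.finRange _).map (pendantEdge i)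

def colorsAt (s : ℕ → α) (t : ℕ → ℕ → α) (i : ℕ) : List α :=
  s (i - 1) :: s i :: (List.range (catDeg i - 2)).map (t i)

/-- The six edges at `x_{i+1}` or `x_{i+2}`. -/
def windowEdges (i : Fin 5) : List (Sym2 V) := edgesAt i.castSucc ++ (edgesAt i.succ).tail

def windowColors (s : ℕ → α) (t : ℕ → ℕ → α) (i : ℕ) : List α :=
  colorsAt s t i ++ (colorsAt s t (i + 1)).tail

theorem map_edgesAt (s : ℕ → α) (t : ℕ → ℕ → α) (i : Fin 6) :
    (edgesAt i).map (catColoring s t) = colorsAt s t (i + 1) := by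
  fin_cases i <;> rfl

theorem map_windowEdges (s : ℕ → α) (t : ℕ → ℕ → α) (i : Fin 5) :
    (windowEdges i).map (catColoring s t) = windowColors s t (i + 1) := by
  fin_cases i <;> rfl

set_option maxRecDepth 10000 in
theorem einc_eq_edgesAt (i : Fin 6) :
    Einc (Cat 6 catDeg) (Sum.inl i.succ.castSucc) = {e | e ∈ edgesAt i} := by
  ext e
  revert e i
  decide +kernel

set_option synthInstance.maxSize 1000 in
set_option maxRecDepth 10000 in
theorem edgesNear_mem_windowEdges : ∀ e ∈ (Cat 6 catDeg).edgeSet, ∀ f ∈ (Cat 6 catDeg).edgeSet,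
    EdgesNear (Cat 6 catDeg) e f → ∃ i, e ∈ windowEdges i ∧ f ∈ windowEdges i := by
  decide +kernel

theorem isStrongEdgeColoring_catColoring (s : ℕ → α) (t : ℕ → ℕ → α)
    (h : ∀ i : Fin 5, (windowColors s t (i + 1)).Nodup) :
    IsStrongEdgeColoring (Cat 6 catDeg) (catColoring s t) := by
  intro e he f hf hne hnear
  obtain ⟨i, hei, hfi⟩ := edgesNear_mem_windowEdges e he f hf hnear
  have hnodup := map_windowEdges s t i ▸ h i
  exact fun hef => hne (List.inj_on_of_nodup_map hnodup hei hfi hef)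

theorem image_einc_catColoring (s : ℕ → α) (t : ℕ → ℕ → α) (i : Fin 6) :
    catColoring s t '' Einc (Cat 6 catDeg) (Sum.inl i.succ.castSucc) =
      {c | c ∈ colorsAt s t (i + 1)} := by
  rw [einc_eq_edgesAt, ← map_edgesAt]
  ext c
  simp

def greedyPendants (s : ℕ → Fin 6) : ℕ → List (Fin 6)
  | 0 => []
  | 1 => [0, 1, 2, 3].filter fun c => c ≠ s 0 ∧ c ≠ s 1
  | i + 2 => (List.finRange 6).filter fun c =>
      c ∉ s i :: s (i + 1) :: greedyPendants s (i + 1) ∧ c ≠ s (i + 2)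

def greedyColor (s : ℕ → Fin 6) (i j : ℕ) : Fin 6 := (greedyPendants s i).getD j 0

set_option maxRecDepth 100000 in
theorem exists_spine_rainbow_windows : ∀ Q ∈ (univ : Finset (Fin 6)).powersetCard 3, ∀ β ∈ Q,
    ∃ s₁ ∈ ({1, 2, 3} : Finset (Fin 6)), ∃ s₅ ∈ Q.erase β,
    ∃ s₃ ∈ ({0, 1, 2, 3} : Finset (Fin 6)).erase s₁ ∩ Q.erase s₅, ∃ s₂ ∈ ({4, 5} : Finset (Fin 6)),
    ∃ s₄ ∈ Qᶜ,
      let s i := [0, s₁, s₂, s₃, s₄, s₅, β].getD i 0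
      (∀ i : Fin 5, (windowColors s (greedyColor s) (i + 1)).Nodup) ∧
      (colorsAt s (greedyColor s) 1).toFinset = {0, 1, 2, 3} ∧
      (colorsAt s (greedyColor s) 6).toFinset = Q := by
  decide +kernel

theorem exists_strongEdgeColoring_fin_six (Q : Finset (Fin 6)) (hQ : #Q = 3) (β : Fin 6)
    (hβ : β ∈ Q) :
    ∃ ψ : Sym2 V → Fin 6, IsStrongEdgeColoring (Cat 6 catDeg) ψ ∧
      ψ '' Einc (Cat 6 catDeg) (Sum.inl ⟨1, by omega⟩) = ↑({0, 1, 2, 3} : Finset (Fin 6)) ∧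
      ψ '' Einc (Cat 6 catDeg) (Sum.inl ⟨6, by omega⟩) = ↑Q ∧
      ψ s(Sum.inl 0, Sum.inl 1) = 0 ∧ ψ s(Sum.inl 6, Sum.inl 7) = β := by
  obtain ⟨s₁, -, s₅, -, s₃, -, s₂, -, s₄, -, hwindows, h₁, h₆⟩ :=
    exists_spine_rainbow_windows Q (mem_powersetCard.mpr ⟨subset_univ Q, hQ⟩) β hβ
  refine ⟨catColoring _ _, isStrongEdgeColoring_catColoring _ _ hwindows,
    (image_einc_catColoring _ _ 0).trans ?_, (image_einc_catColoring _ _ 5).trans ?_, rfl, rfl⟩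
  · rw [← h₁, List.coe_toFinset]; rfl
  · rw [← h₆, List.coe_toFinset]; rfl

end Caterpillar

theorem twoSided_cat434343 :
    TwoSidedPrecolorable 6 (fun i => if Odd i then 4 else 3) 6 := by
  intro C C₁ Cl hC h₁ hl hC₁ hCl α₀ hα₀ αl hαl
  obtain ⟨f, hf, hfC, hfC₁, hf₀⟩ := exists_injective_image_eq hC h₁ (hC₁.trans (by decide)) hα₀
  have hQ : (univ.filter (f · ∈ Cl)).image f = Cl := by
    rw [← filter_image (p := (· ∈ Cl)), hfC, filter_mem_eq_inter, inter_eq_right.mpr hl]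
  obtain ⟨β, -, hβ⟩ := mem_image.mp (hfC ▸ hl hαl)
  obtain ⟨ψ, hψ, hψ₁, hψ₆, hψ₀, hψ₇⟩ := exists_strongEdgeColoring_fin_six _
    (by rw [← card_image_of_injective _ hf, hQ, hCl]; decide) β (by simp [hβ, hαl])
  refine ⟨f ∘ ψ, fun e _ => hfC ▸ mem_image_of_mem f (mem_univ _), hψ.comp hf, ?_, ?_, ?_, ?_⟩
  · rw [Set.image_comp, hψ₁, ← coe_image, hfC₁]
  · rw [Set.image_comp, hψ₆, ← coe_image, hQ]
  · simp [hψ₀, hf₀]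
  · simp [hψ₇, hβ]
end
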